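/- Perpetual Phragmén is not strategyproof: there is an instance with 3 voters and 2 rounds where a voter strictly increases total satisfaction by misreporting in round 1. -/
import Mathlib


open scoped Classical

noncomputable section

/-- A one-round approval profile: each of the `n` voters approves a finite set of
alternatives (alternatives are natural numbers). -/
abbrev Profile (n : ℕ) := Fin n → Finset ℕ

/-- An online temporal voting rule: given the round index `t` and the (infinite
sequence of) approval profiles, it returns the winning alternative of round `t`.
Online rules only look at rounds `0,…,t`. -/
abbrev VRule (n : ℕ) := ℕ → (ℕ → Profile n) → ℕ

/-- Replace voter `i`'s approval set in round `t` by `S`, keeping everything else. -/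
def updateRound {n : ℕ} (A : ℕ → Profile n) (t : ℕ) (i : Fin n) (S : Finset ℕ) :
    ℕ → Profile n :=
  fun s => if s = t then Function.update (A s) i S else A s

/-- A rule is online if the round-`t` winner only depends on rounds `0,…,t`. -/
def OnlineRule {n : ℕ} (R : VRule n) : Prop :=
  ∀ (t : ℕ) (A B : ℕ → Profile n), (∀ s, s ≤ t → A s = B s) → R t A = R t B

/-- Monotonicity: if `c` wins round `t`, adding `c` to any voter's round-`t`
approval set keeps `c` the round-`t` winner. -/
def IsMonotone {n : ℕ} (R : VRule n) : Prop :=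
  ∀ (A : ℕ → Profile n) (t : ℕ) (i : Fin n),
    R t (updateRound A t i (A t i ∪ {R t A})) = R t A

/-- Online independence of irrelevant alternatives: removing a non-winning
alternative `d` from any single voter's round-`t` approvals keeps the winner. -/
def OIIA {n : ℕ} (R : VRule n) : Prop :=
  ∀ (A : ℕ → Profile n) (t : ℕ) (i : Fin n) (d : ℕ), d ≠ R t A →
    R t (updateRound A t i ((A t i).erase d)) = R t A

/-- Online strategyproofness: fixing previous rounds and the other voters, no
misreport `S` by voter `i` in round `t` can turn the round-`t` winner from a
(truthfully) unapproved alternative into an approved one. -/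
def OSP {n : ℕ} (R : VRule n) : Prop :=
  ∀ (A : ℕ → Profile n) (t : ℕ) (i : Fin n) (S : Finset ℕ),
    R t (updateRound A t i S) ∈ A t i → R t A ∈ A t i

/-- `B` deviates from `A` only in voter `i`'s reports. -/
def Deviation {n : ℕ} (i : Fin n) (A B : ℕ → Profile n) : Prop :=
  ∀ (t : ℕ) (j : Fin n), j ≠ i → B t j = A t j

/-- Satisfaction of the group `G` over rounds `0,…,T-1`: the number of rounds in
which the winner under the reported profile `B` is approved (in the reference,
e.g. truthful, profile `A`) by some member of `G`. -/
def satAgainst {n : ℕ} (R : VRule n) (B A : ℕ → Profile n) (T : ℕ)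
    (G : Finset (Fin n)) : ℕ :=
  ((Finset.range T).filter fun t => ∃ i ∈ G, R t B ∈ A t i).card

/-- (Full) strategyproofness: no unilateral misreport strictly increases a
voter's total satisfaction, measured against their truthful approvals. -/
def SP {n : ℕ} (R : VRule n) : Prop :=
  ∀ (A B : ℕ → Profile n) (i : Fin n) (T : ℕ), Deviation i A B →
    satAgainst R B A T {i} ≤ satAgainst R A A T {i}

/-- `G` is `ℓ`-cohesive in the first `T` rounds of `A`: in some `ℓ` rounds all
members of `G` approve a common alternative. -/
def Cohesive {n : ℕ} (A : ℕ → Profile n) (T : ℕ) (G : Finset (Fin n)) (ℓ : ℕ) : Prop :=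
  ∃ Rs : Finset ℕ, Rs ⊆ Finset.range T ∧ Rs.card = ℓ ∧
    ∀ t ∈ Rs, ∃ c, ∀ i ∈ G, c ∈ A t i

/-- Justified representation. -/
def SatisfiesJR {n : ℕ} (R : VRule n) : Prop :=
  ∀ (A : ℕ → Profile n) (T : ℕ) (G : Finset (Fin n)) (ℓ : ℕ),
    Cohesive A T G ℓ → min 1 (ℓ * G.card / n) ≤ satAgainst R A A T G

/-- Proportional justified representation. -/
def SatisfiesPJR {n : ℕ} (R : VRule n) : Prop :=
  ∀ (A : ℕ → Profile n) (T : ℕ) (G : Finset (Fin n)) (ℓ : ℕ),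
    Cohesive A T G ℓ → ℓ * G.card / n ≤ satAgainst R A A T G

end
noncomputable section

/-- Potential average load of group `S`: `(1 + Σ loads)/|S|`. -/
def ppPhi {n : ℕ} (lam : Fin n → ℝ) (S : Finset (Fin n)) : ℝ :=
  (1 + ∑ i ∈ S, lam i) / (S.card : ℝ)

/-- Encode a group of voters as a natural number (for lexicographic tie-breaking). -/
def ppEncode {n : ℕ} (S : Finset (Fin n)) : ℕ :=
  ∑ i ∈ S, 2 ^ (i : ℕ)

/-- The round-winning group of Perpetual Phragmén: among all nonempty groups with
a common approved alternative in `Ct`, one minimizing the potential average load,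
ties broken by the (injective) encoding. -/
def ppGroup {n : ℕ} (lam : Fin n → ℝ) (Ap : Profile n) (Ct : Finset ℕ) :
    Finset (Fin n) :=
  let cands : Finset (Finset (Fin n)) :=
    Finset.univ.filter fun S => S.Nonempty ∧ ∃ c ∈ Ct, ∀ i ∈ S, c ∈ Ap i
  let mins := cands.filter fun S => ∀ S' ∈ cands, ppPhi lam S ≤ ppPhi lam S'
  if h : mins.Nonempty then
    Finset.univ.filter fun i : Fin n =>
      ((mins.image ppEncode).min' (h.image _)).testBit (i : ℕ)
  else ∅

/-- The round winner: the lexicographically first common approved alternative of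
the winning group. -/
def ppWinner {n : ℕ} (lam : Fin n → ℝ) (Ap : Profile n) (Ct : Finset ℕ) : ℕ :=
  sInf {c : ℕ | c ∈ Ct ∧ ∀ i ∈ ppGroup lam Ap Ct, c ∈ Ap i}

/-- Voter loads at the start of round `t` under Perpetual Phragmén. -/
def ppLoad {n : ℕ} (C : ℕ → Finset ℕ) (A : ℕ → Profile n) : ℕ → Fin n → ℝ
  | 0 => fun _ => 0
  | t + 1 => fun i =>
      let lam := ppLoad C A t
      if i ∈ ppGroup lam (A t) (C t) then ppPhi lam (ppGroup lam (A t) (C t))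
      else lam i

/-- Perpetual Phragmén as an online voting rule. -/
def ppRule {n : ℕ} (C : ℕ → Finset ℕ) : VRule n :=
  fun t A => ppWinner (ppLoad C A t) (A t) (C t)

end

noncomputable section
namespace PPCE

lemma ppGroup_eq_of {n : ℕ} (lam : Fin n → ℝ) (Ap : Profile n) (Ct : Finset ℕ)
    (G : Finset (Fin n))
    (hGne : G.Nonempty) (hGc : ∃ c ∈ Ct, ∀ i ∈ G, c ∈ Ap i)
    (hmin : ∀ S : Finset (Fin n), S.Nonempty → (∃ c ∈ Ct, ∀ i ∈ S, c ∈ Ap i) →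
      ppPhi lam G ≤ ppPhi lam S)
    (hlex : ∀ S : Finset (Fin n), S.Nonempty → (∃ c ∈ Ct, ∀ i ∈ S, c ∈ Ap i) →
      ppPhi lam S ≤ ppPhi lam G → ppEncode G ≤ ppEncode S)
    (hbit : ∀ i : Fin n, (ppEncode G).testBit (i : ℕ) ↔ i ∈ G) :
    ppGroup lam Ap Ct = G := by
  unfold ppGroup
  simp only []
  set cands : Finset (Finset (Fin n)) :=
    Finset.univ.filter fun S => S.Nonempty ∧ ∃ c ∈ Ct, ∀ i ∈ S, c ∈ Ap i with hcands
  set mins := cands.filter fun S => ∀ S' ∈ cands, ppPhi lam S ≤ ppPhi lam S' with hmins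
  have hGmem : G ∈ mins := by
    rw [hmins, Finset.mem_filter]
    refine ⟨by simp [hcands, hGne, hGc], ?_⟩
    intro S' hS'
    rw [hcands, Finset.mem_filter] at hS'
    exact hmin S' hS'.2.1 hS'.2.2
  have hne : mins.Nonempty := ⟨G, hGmem⟩
  rw [dif_pos hne]
  have hmin' : (mins.image ppEncode).min' (hne.image _) = ppEncode G := by
    apply le_antisymm
    · exact Finset.min'_le _ _ (Finset.mem_image_of_mem _ hGmem)
    · apply Finset.le_min'
      intro y hy
      rw [Finset.mem_image] at hy
      obtain ⟨S, hS, rfl⟩ := hy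
      rw [hmins, Finset.mem_filter] at hS
      have hScands := hS.1
      have hle := hS.2 G (by simp [hcands, hGne, hGc])
      rw [hcands, Finset.mem_filter] at hScands
      exact hlex S hScands.2.1 hScands.2.2 hle
  rw [hmin']
  ext i
  simp [hbit]



def Av : ℕ → Profile 3 := fun t i => if t = 0 then {0} else {(i : ℕ)}
def Bv : ℕ → Profile 3 := updateRound Av 0 2 {1}

def Ct0 : Finset ℕ := {0, 1, 2}

lemma Av0 : Av 0 = fun _ => ({0} : Finset ℕ) := rfl
lemma Av1 : Av 1 = fun i : Fin 3 => ({(i : ℕ)} : Finset ℕ) := rfl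
lemma Bv0 : Bv 0 = fun i => if i = 2 then ({1} : Finset ℕ) else {0} := by
  funext i
  simp only [Bv, updateRound, Av0, if_true, Function.update_apply]
lemma Bv1 : Bv 1 = Av 1 := by
  simp [Bv, updateRound]

def CC : ℕ → Finset ℕ := fun _ => ({0, 1, 2} : Finset ℕ)

lemma CC_eq : CC 0 = Ct0 := rfl

-- classification lemmas for candidate groups
lemma classA0 : ∀ S : Finset (Fin 3), S.Nonempty → (∃ c ∈ Ct0, ∀ i ∈ S, c ∈ Av 0 i) →
    S ∈ ({{0}, {1}, {2}, {0,1}, {0,2}, {1,2}, {0,1,2}} : Finset (Finset (Fin 3))) := by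
  decide

lemma classA1 : ∀ S : Finset (Fin 3), S.Nonempty → (∃ c ∈ Ct0, ∀ i ∈ S, c ∈ Av 1 i) →
    S ∈ ({{0}, {1}, {2}} : Finset (Finset (Fin 3))) := by
  decide

lemma classB0 : ∀ S : Finset (Fin 3), S.Nonempty → (∃ c ∈ Ct0, ∀ i ∈ S, c ∈ Bv 0 i) →
    S ∈ ({{0}, {1}, {2}, {0,1}} : Finset (Finset (Fin 3))) := by
  decide

lemma classB1 : ∀ S : Finset (Fin 3), S.Nonempty → (∃ c ∈ Ct0, ∀ i ∈ S, c ∈ Bv 1 i) →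
    S ∈ ({{0}, {1}, {2}} : Finset (Finset (Fin 3))) := by
  decide

lemma loadA0 : ppLoad CC Av 0 = fun _ => 0 := rfl
lemma loadB0 : ppLoad CC Bv 0 = fun _ => 0 := rfl

lemma phi_sing (lam : Fin 3 → ℝ) (i : Fin 3) : ppPhi lam {i} = 1 + lam i := by
  simp [ppPhi]

lemma groupA0 : ppGroup (ppLoad CC Av 0) (Av 0) Ct0 = Finset.univ := by
  rw [loadA0]
  apply ppGroup_eq_of
  · exact Finset.univ_nonempty
  · exact ⟨0, by decide⟩
  · intro S hne hc
    have h := classA0 S hne hc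
    have huniv : ppPhi (fun _ => (0:ℝ)) (Finset.univ : Finset (Fin 3)) = 1/3 := by
      norm_num [ppPhi, Finset.card_univ]
    rw [huniv]
    fin_cases h <;> norm_num [ppPhi, show ({0,2}:Finset (Fin 3)).card = 2 from by decide, show ({1,2}:Finset (Fin 3)).card = 2 from by decide, show ({0,1}:Finset (Fin 3)).card = 2 from by decide, show ({0,1,2}:Finset (Fin 3)).card = 3 from by decide]
  · intro S hne hc hphi
    have h := classA0 S hne hc
    have huniv : ppPhi (fun _ => (0:ℝ)) (Finset.univ : Finset (Fin 3)) = 1/3 := by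
      norm_num [ppPhi, Finset.card_univ]
    rw [huniv] at hphi
    fin_cases h <;>
      first
      | decide
      | (norm_num [ppPhi, show ({0,2}:Finset (Fin 3)).card = 2 from by decide, show ({1,2}:Finset (Fin 3)).card = 2 from by decide, show ({0,1}:Finset (Fin 3)).card = 2 from by decide, show ({0,1,2}:Finset (Fin 3)).card = 3 from by decide] at hphi)
  · decide

lemma loadA1 : ppLoad CC Av 1 = fun _ => 1/3 := by
  funext i
  show (if i ∈ ppGroup (ppLoad CC Av 0) (Av 0) (CC 0) then
    ppPhi (ppLoad CC Av 0) (ppGroup (ppLoad CC Av 0) (Av 0) (CC 0)) else ppLoad CC Av 0 i) = 1/3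
  rw [CC_eq, groupA0, loadA0, if_pos (Finset.mem_univ i)]
  norm_num [ppPhi, Finset.card_univ]

lemma groupA1 : ppGroup (ppLoad CC Av 1) (Av 1) Ct0 = {0} := by
  rw [loadA1]
  apply ppGroup_eq_of
  · exact ⟨0, Finset.mem_singleton_self 0⟩
  · exact ⟨0, by decide⟩
  · intro S hne hc
    have h := classA1 S hne hc
    fin_cases h <;> norm_num [phi_sing]
  · intro S hne hc hphi
    have h := classA1 S hne hc
    fin_cases h <;> decide
  · decide

lemma groupB0 : ppGroup (ppLoad CC Bv 0) (Bv 0) Ct0 = {0, 1} := by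
  rw [loadB0]
  apply ppGroup_eq_of
  · exact ⟨0, by decide⟩
  · refine ⟨0, by decide, ?_⟩
    intro i hi
    fin_cases hi <;> rw [Bv0] <;> decide
  · intro S hne hc
    have h := classB0 S hne hc
    have h01 : ppPhi (fun _ => (0:ℝ)) ({0,1} : Finset (Fin 3)) = 1/2 := by
      rw [ppPhi]; norm_num
  
    rw [h01]
    fin_cases h <;> norm_num [ppPhi, show ({0,2}:Finset (Fin 3)).card = 2 from by decide, show ({1,2}:Finset (Fin 3)).card = 2 from by decide, show ({0,1}:Finset (Fin 3)).card = 2 from by decide, show ({0,1,2}:Finset (Fin 3)).card = 3 from by decide]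
  · intro S hne hc hphi
    have h := classB0 S hne hc
    have h01 : ppPhi (fun _ => (0:ℝ)) ({0,1} : Finset (Fin 3)) = 1/2 := by
      rw [ppPhi]; norm_num
    rw [h01] at hphi
    fin_cases h <;>
      first
      | decide
      | (norm_num [ppPhi, show ({0,2}:Finset (Fin 3)).card = 2 from by decide, show ({1,2}:Finset (Fin 3)).card = 2 from by decide, show ({0,1}:Finset (Fin 3)).card = 2 from by decide, show ({0,1,2}:Finset (Fin 3)).card = 3 from by decide] at hphi)
  · decide

lemma loadB1 : ppLoad CC Bv 1 = fun i => if i = 2 then 0 else 1/2 := by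
  funext i
  show (if i ∈ ppGroup (ppLoad CC Bv 0) (Bv 0) (CC 0) then
    ppPhi (ppLoad CC Bv 0) (ppGroup (ppLoad CC Bv 0) (Bv 0) (CC 0)) else ppLoad CC Bv 0 i) = _
  rw [CC_eq, groupB0, loadB0]
  have h01 : ppPhi (fun _ => (0:ℝ)) ({0,1} : Finset (Fin 3)) = 1/2 := by
    rw [ppPhi]; norm_num
  rw [h01]
  fin_cases i <;> simp

lemma groupB1 : ppGroup (ppLoad CC Bv 1) (Bv 1) Ct0 = {2} := by
  rw [loadB1]
  apply ppGroup_eq_of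
  · exact ⟨2, Finset.mem_singleton_self 2⟩
  · exact ⟨2, by decide⟩
  · intro S hne hc
    have h := classB1 S hne hc
    fin_cases h <;> simp [phi_sing]
  · intro S hne hc hphi
    have h := classB1 S hne hc
    fin_cases h <;>
      first
      | decide
      | (simp [phi_sing] at hphi; norm_num at hphi)
  · decide

lemma winA0 : ppRule CC 0 Av = 0 := by
  show ppWinner (ppLoad CC Av 0) (Av 0) (CC 0) = 0
  rw [ppWinner, CC_eq, groupA0]
  have : {c : ℕ | c ∈ Ct0 ∧ ∀ i ∈ (Finset.univ : Finset (Fin 3)), c ∈ Av 0 i} = {0} := by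
    ext c
    constructor
    · rintro ⟨_, h⟩
      simpa [Av0] using h 0 (Finset.mem_univ 0)
    · rintro rfl
      exact ⟨by decide, fun i _ => by simp [Av0]⟩
  rw [this, csInf_singleton]

lemma winA1 : ppRule CC 1 Av = 0 := by
  show ppWinner (ppLoad CC Av 1) (Av 1) (CC 1) = 0
  rw [ppWinner, show CC 1 = Ct0 from rfl, groupA1]
  have : {c : ℕ | c ∈ Ct0 ∧ ∀ i ∈ ({0} : Finset (Fin 3)), c ∈ Av 1 i} = {0} := by
    ext c
    constructor
    · rintro ⟨_, h⟩
      simpa [Av1] using h 0 (Finset.mem_singleton_self 0)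
    · rintro rfl
      refine ⟨by decide, fun i hi => ?_⟩
      rw [Finset.mem_singleton] at hi
      subst hi
      simp [Av1]
  rw [this, csInf_singleton]

lemma winB0 : ppRule CC 0 Bv = 0 := by
  show ppWinner (ppLoad CC Bv 0) (Bv 0) (CC 0) = 0
  rw [ppWinner, CC_eq, groupB0]
  have : {c : ℕ | c ∈ Ct0 ∧ ∀ i ∈ ({0, 1} : Finset (Fin 3)), c ∈ Bv 0 i} = {0} := by
    ext c
    constructor
    · rintro ⟨_, h⟩
      simpa [Bv0] using h 0 (by decide)
    · rintro rfl
      refine ⟨by decide, fun i hi => ?_⟩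
      fin_cases hi <;> rw [Bv0] <;> decide
  rw [this, csInf_singleton]

lemma winB1 : ppRule CC 1 Bv = 2 := by
  show ppWinner (ppLoad CC Bv 1) (Bv 1) (CC 1) = 2
  rw [ppWinner, show CC 1 = Ct0 from rfl, groupB1]
  have : {c : ℕ | c ∈ Ct0 ∧ ∀ i ∈ ({2} : Finset (Fin 3)), c ∈ Bv 1 i} = {2} := by
    ext c
    constructor
    · rintro ⟨_, h⟩
      simpa [Bv1, Av1] using h 2 (Finset.mem_singleton_self 2)
    · rintro rfl
      refine ⟨by decide, fun i hi => ?_⟩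
      rw [Finset.mem_singleton] at hi
      subst hi
      simp [Bv1, Av1]
  rw [this, csInf_singleton]

lemma satA : satAgainst (ppRule CC) Av Av 2 {2} = 1 := by
  rw [satAgainst]
  refine Finset.card_eq_one.mpr ⟨0, ?_⟩
  · ext t
    simp only [Finset.mem_filter, Finset.mem_range, Finset.mem_singleton, exists_eq_left]
    constructor
    · rintro ⟨ht, hw⟩
      interval_cases t
      · rfl
      · rw [winA1] at hw
        simp [Av1] at hw
    · rintro rfl
      exact ⟨by norm_num, by rw [winA0]; simp [Av0]⟩

lemma satB : satAgainst (ppRule CC) Bv Av 2 {2} = 2 := by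
  rw [satAgainst]
  refine Finset.card_eq_two.mpr ⟨0, 1, by norm_num, ?_⟩
  · ext t
    simp only [Finset.mem_filter, Finset.mem_range, Finset.mem_insert, Finset.mem_singleton,
      exists_eq_left]
    constructor
    · rintro ⟨ht, _⟩
      omega
    · rintro (rfl | rfl)
      · exact ⟨by norm_num, by rw [winB0]; simp [Av0]⟩
      · exact ⟨by norm_num, by rw [winB1]; simp [Av1]⟩

end PPCE


/-- Perpetual Phragmén is not strategyproof: with 3 voters, 2
rounds and alternatives `{0,1,2}` every round, some voter strictly increases
total satisfaction by misreporting in round 1 only. -/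
theorem perpetualPhragmen_not_SP :
    ∃ (A B : ℕ → Profile 3) (i : Fin 3), Deviation i A B ∧
      (∀ t, t ≠ 0 → B t = A t) ∧
      satAgainst (ppRule fun _ => ({0, 1, 2} : Finset ℕ)) A A 2 {i} <
        satAgainst (ppRule fun _ => ({0, 1, 2} : Finset ℕ)) B A 2 {i} := by

  refine ⟨PPCE.Av, PPCE.Bv, 2, ?_, ?_, ?_⟩
  · intro t j hj
    simp only [PPCE.Bv, updateRound]
    split
    · rw [Function.update_of_ne hj]
    · rfl
  · intro t ht
    simp [PPCE.Bv, updateRound, ht]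
  · rw [show (ppRule fun _ => ({0,1,2} : Finset ℕ)) = ppRule PPCE.CC from rfl,
      PPCE.satA, PPCE.satB]
    norm_num
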